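/- In the decomposition w = x₁w₁⋯x_{2m-1}w_{2m-1}x_{2m}v of a non-empty operation sequence (with x₁⋯x_{2m} unbreakable, each wᵢ a tsip word, v an operation sequence), every tsip sub-word of w that is not a prefix of w is contained entirely within one of the words wᵢ or within v. -/

import Mathlib

/-- The four deque operations: input to the top/bottom, output from the top/bottom. -/
inductive Letter : Type
  | I1 | I2 | O1 | O2
  deriving DecidableEq, Repr

open Letter

/-- Whether a letter is an input operation. -/
def Letter.isI : Letter → Bool
  | I1 => true | I2 => true | O1 => false | O2 => false

/-- Number of input letters in a word. -/
def countI (w : List Letter) : ℕ := (w.filter Letter.isI).length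

/-- Number of output letters in a word. -/
def countO (w : List Letter) : ℕ := (w.filter fun x => !x.isI).length

/-- An operation sequence: equally many inputs and outputs, and every prefix has at
least as many inputs as outputs. -/
def IsOpSeq (w : List Letter) : Prop :=
  countI w = countO w ∧ ∀ m : ℕ, countO (w.take m) ≤ countI (w.take m)

/-- A tsip word: for each end `j ∈ {1,2}` of the deque, the number of `Iⱼ` equals the
number of `Oⱼ`, and every prefix contains at least as many `Iⱼ` as `Oⱼ`. -/
def IsTsip (w : List Letter) : Prop :=
  (w.count I1 = w.count O1) ∧ (w.count I2 = w.count O2) ∧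
    ∀ m : ℕ, (w.take m).count O1 ≤ (w.take m).count I1 ∧
      (w.take m).count O2 ≤ (w.take m).count I2

/-- A word outputs eagerly if it contains no consecutive sub-word `I₁O₂` or `I₂O₁`. -/
def OutputsEagerly (w : List Letter) : Prop :=
  ¬ [I1, O2] <:+: w ∧ ¬ [I2, O1] <:+: w

/-- A word is standard if every non-empty tsip sub-word begins with `I₁`. -/
def Standard (w : List Letter) : Prop :=
  ∀ u : List Letter, u <:+: w → IsTsip u → u ≠ [] → u.head? = some I1

/-- A word is top happy if `I₂` and `O₂` occur only when the number of preceding inputs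
exceeds the number of preceding outputs by at least two (i.e. the deque holds at least
two items). -/
def TopHappy (w : List Letter) : Prop :=
  ∀ u v : List Letter, ∀ x : Letter, w = u ++ x :: v → (x = I2 ∨ x = O2) →
    countO u + 2 ≤ countI u

/-- A canonical operation sequence: outputs eagerly, standard and top happy. -/
def Canonical (w : List Letter) : Prop :=
  OutputsEagerly w ∧ Standard w ∧ TopHappy w

/-- The state of a deque machine: the remaining input, the deque contents (top first),
and the output produced so far. -/
structure DequeState : Type where
  inp : List ℕ
  dq : List ℕ
  out : List ℕ
  deriving DecidableEq, Repr

/-- Apply a single operation to a deque state, if possible. -/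
def applyOp : Letter → DequeState → Option DequeState
  | I1, ⟨a :: r, d, o⟩ => some ⟨r, a :: d, o⟩
  | I2, ⟨a :: r, d, o⟩ => some ⟨r, d ++ [a], o⟩
  | O1, ⟨r, a :: d, o⟩ => some ⟨r, d, o ++ [a]⟩
  | O2, ⟨r, d, o⟩ =>
      match d.getLast? with
      | some a => some ⟨r, d.dropLast, o ++ [a]⟩
      | none => none
  | I1, ⟨[], _, _⟩ => none
  | I2, ⟨[], _, _⟩ => none
  | O1, ⟨_, [], _⟩ => none

/-- Run a word of operations on a deque state. -/
def runOps : List Letter → DequeState → Option DequeState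
  | [], s => some s
  | x :: w, s => (applyOp x s).bind (runOps w)

/-- `w` produces the permutation (given as the list `l`): applying `w` to the identity
input `0, 1, …, l.length - 1` empties the input and the deque with output exactly `l`. -/
def Produces (w : List Letter) (l : List ℕ) : Prop :=
  runOps w ⟨List.range l.length, [], []⟩ = some ⟨[], [], l⟩

/-- A list is deque-achievable if it is a permutation of `0, …, n-1` produced by some
operation sequence. -/
def DequeAchievable (l : List ℕ) : Prop := ∃ w : List Letter, Produces w l

/-- An unbreakable operation sequence: non-empty, contains no tsip sub-word other than
possibly itself or the empty word, and no proper non-empty prefix is an operation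
sequence (the deque is never empty strictly inside the sequence). -/
def IsUnbreakable (s : List Letter) : Prop :=
  IsOpSeq s ∧ s ≠ [] ∧
    (∀ u : List Letter, u <:+: s → IsTsip u → u = [] ∨ u = s) ∧
    ∀ p : List Letter, p <+: s → IsOpSeq p → p = [] ∨ p = s

/-- `IsDecomp w xs ws v` asserts that `w = x₁w₁x₂w₂⋯x_{2m-1}w_{2m-1}x_{2m}v`, where
`xs = [x₁,…,x_{2m}]` with `m ≥ 1` forms an unbreakable operation sequence, each `wᵢ` in
`ws = [w₁,…,w_{2m-1}]` is a (possibly empty) tsip word, and `v` is an operation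
sequence. -/
def IsDecomp (w : List Letter) (xs : List Letter) (ws : List (List Letter))
    (v : List Letter) : Prop :=
  (∃ m : ℕ, 0 < m ∧ xs.length = 2 * m) ∧
    xs.length = ws.length + 1 ∧
    IsUnbreakable xs ∧
    (∀ wi ∈ ws, IsTsip wi) ∧
    IsOpSeq v ∧
    w = (List.zipWith (fun x wi => x :: wi) xs (ws ++ [[]])).flatten ++ v


/-!
Each end of the deque, and the deque as a whole, is a Dyck path: a word is tsip iff it is a
Dyck word for the steps `I₁ ↦ 1, O₁ ↦ -1` and for the steps `I₂ ↦ 1, O₂ ↦ -1`, and it is an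
operation sequence iff it is a Dyck word for their sum, the height.

A tsip sub-word `u` that is neither a prefix of `w` nor inside some `wᵢ` or `v` starts with a
possibly empty suffix `s` of some `wₖ` and runs on through `xₖ₊₁`. Deleting the complete tsip
words `wᵢ` that it covers leaves a tsip word `s q p`, where `q` is a non-empty prefix of
`xₖ₊₁ ⋯ x_{2m}` and `p` is a prefix of some `wⱼ`, or `q = xₖ₊₁ ⋯ x_{2m}` and `p` is a prefix
of `v`. Both weights of `s`
are `≤ 0` (a suffix of a Dyck word) and `≥ 0` (a prefix of one), hence `0`. In the first case
`p` has non-negative weights, which forces `q` to be a tsip sub-word of the unbreakable word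
`x₁ ⋯ x_{2m}`, impossible. In the second, `q` has non-negative height, so `x₁ ⋯ xₖ` would be an
operation sequence, a proper prefix of the unbreakable word.
-/

open List

theorem prefix_append_cases {α : Type*} {z a b : List α} (h : z <+: a ++ b) :
    z <+: a ∨ ∃ z', z' ≠ [] ∧ z' <+: b ∧ z = a ++ z' := by
  obtain ⟨t, ht⟩ := h
  rcases append_eq_append_iff.mp ht with ⟨a', rfl, -⟩ | ⟨z', rfl, hb⟩
  · exact Or.inl (prefix_append z a')
  · by_cases hz' : z' = []
    · subst hz'
      exact Or.inl (by simp)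
    · exact Or.inr ⟨z', hz', ⟨t, hb.symm⟩, rfl⟩

section Dyck

variable {α : Type*} (c : α → ℤ)

def weight (z : List α) : ℤ := (z.map c).sum

@[simp]
theorem weight_append (a b : List α) : weight c (a ++ b) = weight c a + weight c b := by
  simp [weight]

theorem weight_add (d : α → ℤ) (z : List α) : weight (c + d) z = weight c z + weight d z :=
  sum_map_add

def IsDyck (z : List α) : Prop :=
  weight c z = 0 ∧ ∀ p, p <+: z → 0 ≤ weight c p

variable {c}

theorem isDyck_iff_take {z : List α} :
    IsDyck c z ↔ weight c z = 0 ∧ ∀ m, 0 ≤ weight c (z.take m) := by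
  refine and_congr_right fun _ => ⟨fun h m => h _ (take_prefix m z), fun h p hp => ?_⟩
  rw [prefix_iff_eq_take.mp hp]
  exact h _

namespace IsDyck

theorem weight_suffix_nonpos {s t : List α} (ht : IsDyck c t) (hs : s <:+ t) :
    weight c s ≤ 0 := by
  obtain ⟨r, rfl⟩ := hs
  have := ht.2 r (prefix_append r s)
  linarith [ht.1, weight_append c r s]

theorem delete_infix {a b d : List α} (h : IsDyck c (a ++ b ++ d)) (hb : IsDyck c b) :
    IsDyck c (a ++ d) := by
  have hsum := h.1
  simp only [weight_append] at hsum
  refine ⟨by rw [weight_append]; linarith [hb.1], fun p hp => ?_⟩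
  rcases prefix_append_cases hp with hpa | ⟨d', -, hd', rfl⟩
  · exact h.2 p (hpa.trans (by simp))
  · have := h.2 (a ++ b ++ d') (by simpa using hd')
    simp only [weight_append] at this ⊢
    linarith [hb.1]

theorem of_append_left {a b : List α} (h : IsDyck c (a ++ b)) (hb : 0 ≤ weight c b) :
    IsDyck c a := by
  have := h.2 a (prefix_append a b)
  exact ⟨by linarith [h.1, weight_append c a b],
    fun p hp => h.2 p (hp.trans (prefix_append a b))⟩

theorem of_append_right {a b : List α} (h : IsDyck c (a ++ b)) (ha : weight c a ≤ 0) :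
    IsDyck c b := by
  have := h.2 a (prefix_append a b)
  refine ⟨by linarith [h.1, weight_append c a b], fun p hp => ?_⟩
  have := h.2 (a ++ p) ((prefix_append_right_inj a).mpr hp)
  linarith [weight_append c a p]

end IsDyck

end Dyck

namespace Letter

def step₁ : Letter → ℤ
  | I1 => 1 | O1 => -1 | I2 => 0 | O2 => 0

def step₂ : Letter → ℤ
  | I2 => 1 | O2 => -1 | I1 => 0 | O1 => 0

end Letter

theorem weight_step₁ (z : List Letter) : weight step₁ z = z.count I1 - z.count O1 := by
  induction z with
  | nil => rfl
  | cons x z ih =>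
    simp only [weight, map_cons, sum_cons] at ih ⊢
    cases x <;> simp [ih, Letter.step₁] <;> ring

theorem weight_step₂ (z : List Letter) : weight step₂ z = z.count I2 - z.count O2 := by
  induction z with
  | nil => rfl
  | cons x z ih =>
    simp only [weight, map_cons, sum_cons] at ih ⊢
    cases x <;> simp [ih, Letter.step₂] <;> ring

theorem weight_step₁_add_step₂ (z : List Letter) :
    weight (step₁ + step₂) z = countI z - countO z := by
  induction z with
  | nil => rfl
  | cons x z ih =>
    simp only [weight, map_cons, sum_cons, countI, countO] at ih ⊢
    cases x <;> simp [ih, Letter.step₁, Letter.step₂, Letter.isI, filter_cons] <;> ring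

theorem isTsip_iff_isDyck {z : List Letter} :
    IsTsip z ↔ IsDyck step₁ z ∧ IsDyck step₂ z := by
  simp only [IsTsip, isDyck_iff_take, weight_step₁, weight_step₂, forall_and, sub_eq_zero,
    sub_nonneg, Nat.cast_inj, Nat.cast_le]
  tauto

theorem isOpSeq_iff_isDyck {z : List Letter} : IsOpSeq z ↔ IsDyck (step₁ + step₂) z := by
  simp only [IsOpSeq, isDyck_iff_take, weight_step₁_add_step₂, sub_eq_zero, sub_nonneg,
    Nat.cast_inj, Nat.cast_le]

theorem isTsip_nil : IsTsip [] := by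
  simp [IsTsip]

namespace IsTsip

theorem delete_infix {a b d : List Letter} (h : IsTsip (a ++ b ++ d)) (hb : IsTsip b) :
    IsTsip (a ++ d) := by
  rw [isTsip_iff_isDyck] at *
  exact ⟨h.1.delete_infix hb.1, h.2.delete_infix hb.2⟩

theorem of_suffix_append_prefix {t ω s q p : List Letter} (ht : IsTsip t) (hω : IsTsip ω)
    (hs : s <:+ t) (hp : p <+: ω) (h : IsTsip (s ++ q ++ p)) : IsTsip q := by
  rw [isTsip_iff_isDyck] at *
  exact ⟨(h.1.of_append_left (hω.1.2 p hp)).of_append_right (ht.1.weight_suffix_nonpos hs),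
    (h.2.of_append_left (hω.2.2 p hp)).of_append_right (ht.2.weight_suffix_nonpos hs)⟩

theorem height_nonneg_of_suffix_append {t s q p : List Letter} (ht : IsTsip t) (hs : s <:+ t)
    (h : IsTsip (s ++ q ++ p)) : 0 ≤ weight (step₁ + step₂) q := by
  rw [isTsip_iff_isDyck] at ht h
  have h₁ := h.1.2 (s ++ q) (prefix_append _ p)
  have h₂ := h.2.2 (s ++ q) (prefix_append _ p)
  rw [weight_append] at h₁ h₂
  linarith [weight_add step₁ step₂ q, ht.1.weight_suffix_nonpos hs, ht.2.weight_suffix_nonpos hs]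

end IsTsip

theorem IsUnbreakable.height_suffix_neg {xs t : List Letter} (h : IsUnbreakable xs)
    (ht : t <:+ xs) (ht₀ : t ≠ []) (htxs : t ≠ xs) : weight (step₁ + step₂) t < 0 := by
  obtain ⟨r, rfl⟩ := ht
  by_contra! hnonneg
  have hr : IsOpSeq r := isOpSeq_iff_isDyck.mpr
    ((isOpSeq_iff_isDyck.mp h.1).of_append_left hnonneg)
  rcases h.2.2.2 r (prefix_append r t) hr with rfl | hr
  · exact htxs rfl
  · exact ht₀ (by simpa using hr)

section Interlace

variable {α : Type*}

def interlace (Y : List α) (W : List (List α)) : List α :=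
  (zipWith (fun y ω => y :: ω) Y W).flatten

@[simp]
theorem interlace_nil_left (W : List (List α)) : interlace [] W = [] := rfl

@[simp]
theorem interlace_nil_right (Y : List α) : interlace Y [] = [] := by
  simp [interlace]

@[simp]
theorem interlace_cons_cons (y : α) (Y : List α) (ω : List α) (W : List (List α)) :
    interlace (y :: Y) (ω :: W) = y :: (ω ++ interlace Y W) := rfl

theorem infix_interlace_append_cases {Y : List α} {W : List (List α)} {u v : List α}
    (hu : u <:+: interlace Y W ++ v) :
    u <+: interlace Y W ++ v ∨ (∃ ω ∈ W, u <:+: ω) ∨ u <:+: v ∨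
      ∃ (k : ℕ) (hk : k < W.length) (s z : List α), s <:+ W[k] ∧ z ≠ [] ∧
        z <+: interlace (Y.drop (k + 1)) (W.drop (k + 1)) ++ v ∧ u = s ++ z := by
  induction Y generalizing W with
  | nil => exact Or.inr (Or.inr (Or.inl (by simpa using hu)))
  | cons y Y ih =>
    cases W with
    | nil => exact Or.inr (Or.inr (Or.inl (by simpa using hu)))
    | cons ω W =>
      rw [interlace_cons_cons, cons_append, append_assoc] at hu ⊢
      rcases infix_cons_iff.mp hu with hp | hu
      · exact Or.inl hp
      rcases infix_append_iff_ne_nil.mp hu with hω | hu |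
          ⟨s, z, -, hz, rfl, hs, hzp⟩
      · exact Or.inr (Or.inl ⟨ω, mem_cons_self, hω⟩)
      · rcases ih hu with hp | ⟨ω', hω', hω'u⟩ | hv | ⟨k, hk, s, z, hs, hz, hzp, rfl⟩
        · by_cases hu₀ : u = []
          · exact Or.inl (hu₀ ▸ nil_prefix)
          · exact Or.inr (Or.inr (Or.inr
              ⟨0, by simp, [], u, nil_suffix, hu₀, by simpa using hp, rfl⟩))
        · exact Or.inr (Or.inl ⟨ω', mem_cons_of_mem _ hω', hω'u⟩)
        · exact Or.inr (Or.inr (Or.inl hv))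
        · exact Or.inr (Or.inr (Or.inr
            ⟨k + 1, by simpa using hk, s, z, by simpa using hs, hz, by simpa using hzp, rfl⟩))
      · exact Or.inr (Or.inr (Or.inr ⟨0, by simp, s, z, hs, hz, by simpa using hzp, rfl⟩))

end Interlace

theorem exists_isTsip_of_prefix_interlace_append {Y : List Letter} {W : List (List Letter)}
    (hYW : Y.length = W.length) (hW : ∀ ω ∈ W, IsTsip ω) {s z v : List Letter} (hz : z ≠ [])
    (hzp : z <+: interlace Y W ++ v) (hsz : IsTsip (s ++ z)) :
    ∃ q p, q <+: Y ∧ IsTsip (s ++ q ++ p) ∧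
      ((q ≠ [] ∧ ∃ ω ∈ W, p <+: ω) ∨ (q = Y ∧ p <+: v)) := by
  induction Y generalizing W s z with
  | nil => exact ⟨[], z, nil_prefix, by simpa using hsz, Or.inr ⟨rfl, by simpa using hzp⟩⟩
  | cons y Y ih =>
    obtain ⟨ω, W, rfl⟩ := exists_cons_of_length_eq_add_one hYW.symm
    obtain ⟨z₀, z, rfl⟩ := exists_cons_of_ne_nil hz
    rw [interlace_cons_cons, cons_append, append_assoc, cons_prefix_cons] at hzp
    obtain ⟨rfl, hzp⟩ := hzp
    rcases prefix_append_cases hzp with hzω | ⟨z', hz', hz'p, rfl⟩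
    · exact ⟨[z₀], z, by simp, by simpa using hsz,
        Or.inl ⟨cons_ne_nil _ _, ω, mem_cons_self, hzω⟩⟩
    · have hsz' : IsTsip (s ++ [z₀] ++ z') :=
        IsTsip.delete_infix (b := ω) (by simpa using hsz) (hW ω mem_cons_self)
      obtain ⟨q, p, hq, hsqp, hqp⟩ := ih (by simpa using hYW)
        (fun ω' hω' => hW ω' (mem_cons_of_mem _ hω')) hz' hz'p hsz'
      refine ⟨z₀ :: q, p, (cons_prefix_cons).mpr ⟨rfl, hq⟩, by simpa using hsqp, ?_⟩
      rcases hqp with ⟨-, ω', hω', hpω'⟩ | ⟨rfl, hpv⟩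
      · exact Or.inl ⟨cons_ne_nil _ _, ω', mem_cons_of_mem _ hω', hpω'⟩
      · exact Or.inr ⟨rfl, hpv⟩

theorem IsUnbreakable.not_isTsip_crossing {xs : List Letter} {W : List (List Letter)}
    (hxs : IsUnbreakable xs) (hlen : xs.length = W.length) (hW : ∀ ω ∈ W, IsTsip ω) {k : ℕ}
    (hk : k + 1 < W.length) {s z v : List Letter} (hs : s <:+ W[k]) (hz : z ≠ [])
    (hzp : z <+: interlace (xs.drop (k + 1)) (W.drop (k + 1)) ++ v) : ¬ IsTsip (s ++ z) := by
  intro hsz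
  have hWk : IsTsip W[k] := hW _ (getElem_mem _)
  obtain ⟨q, p, hq, hsqp, ⟨hq₀, ω, hω, hpω⟩ | ⟨rfl, -⟩⟩ :=
    exists_isTsip_of_prefix_interlace_append (by simp [hlen])
      (fun ω hω => hW ω (mem_of_mem_drop hω)) hz hzp hsz
  · have hqxs : q = xs := (hxs.2.2.1 q (hq.isInfix.trans (drop_suffix _ _).isInfix)
      (hWk.of_suffix_append_prefix (hW ω (mem_of_mem_drop hω)) hs hpω hsqp)).resolve_left hq₀
    have := hq.length_le
    simp only [hqxs, length_drop] at this
    omega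
  · have hdrop₀ : xs.drop (k + 1) ≠ [] := by simp; omega
    have hdrop : xs.drop (k + 1) ≠ xs := fun h => by
      have := congrArg length h
      simp only [length_drop] at this
      omega
    exact (hxs.height_suffix_neg (drop_suffix _ _) hdrop₀ hdrop).not_ge
      (hWk.height_nonneg_of_suffix_append hs hsqp)

/-- In the decomposition `w = x₁w₁⋯x_{2m-1}w_{2m-1}x_{2m}v` of a non-empty operation
sequence, every tsip sub-word of `w` that is not a prefix of `w` is contained entirely
within one of the words `wᵢ` or within `v`. -/
theorem stmt_9 (w : List Letter) (xs : List Letter) (ws : List (List Letter))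
    (v : List Letter) (hd : IsDecomp w xs ws v)
    (u : List Letter) (hinf : u <:+: w) (htsip : IsTsip u) (hpre : ¬ u <+: w) :
    (∃ wi ∈ ws, u <:+: wi) ∨ u <:+: v := by
  obtain ⟨-, hlen, hunb, hws, -, hw⟩ := hd
  replace hw : w = interlace xs (ws ++ [[]]) ++ v := hw
  subst hw
  have hW : ∀ ω ∈ ws ++ [[]], IsTsip ω := by
    simpa [or_imp, forall_and, isTsip_nil] using hws
  rcases infix_interlace_append_cases hinf with hp | ⟨ω, hω, hu⟩ | hv |
      ⟨k, hk, s, z, hs, hz, hzp, rfl⟩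
  · exact absurd hp hpre
  · rcases mem_append.mp hω with hω | hω
    · exact Or.inl ⟨ω, hω, hu⟩
    · rw [mem_singleton.mp hω, infix_nil] at hu
      exact absurd (hu ▸ nil_prefix) hpre
  · exact Or.inr hv
  · obtain rfl | hk : k = ws.length ∨ k + 1 < (ws ++ [[]]).length := by
      simp only [length_append, length_singleton] at hk ⊢
      omega
    · simp only [getElem_concat_length, suffix_nil] at hs
      subst hs
      exact Or.inr (by simpa using hzp.isInfix)
    · exact absurd htsip (hunb.not_isTsip_crossing (by simp [hlen]) hW hk hs hz hzp)
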